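/- arXiv:1407.7717 — 3 statements merged into one kernel-verified Lean document; each statement's English description precedes it below -/
import Mathlib

section
/- The primal value function grows sublinearly: lim_{x→∞} u(x)/x = 0. -/
/-!
Framework for "Convex duality for stochastic singular control problems"
by Bank and Kauppila.

* Time is indexed by `ℝ≥0`, i.e. `[0,∞)`; the value of a control at `t = ∞` is its
  supremum over `ℝ≥0` (controls are nondecreasing and left-continuous, so this is
  the left-continuous extension to `[0,∞]`), and the value `D_∞ = 0` of a dual
  variable at `∞` is a convention that does not enter any of the quantities below.
* `Setup` bundles the filtered probability space (with the usual conditions),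
  the stochastic clock `A` together with its associated random measure (a kernel)
  `μ`, and the utility random field `U` with marginal utility `U'` satisfying
  Assumption 1 of the paper.
* The pairing `𝔼⟨C,D⟩ = 𝔼 ∫_{[0,∞)} D_t dC_t` is expressed by the layer-cake
  formula: for a left-continuous nondecreasing `C` with `C_0 = 0`, and a
  right-continuous nonincreasing `D`, one has
  `∫_{[0,∞)} D_t dC_t = ∫_0^∞ (dC-measure of {t : D_t > y}) dy`, and the
  `dC`-measure of the set `{t : D_t > y}` (an interval of the form `[0,s)`,
  possibly `[0,∞)`) equals `sup {C_t : D_t > y}`.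
-/

open MeasureTheory Filter Set
open scoped ENNReal NNReal Topology

noncomputable section

/-- The underlying framework (filtered probability space satisfying the usual
conditions, stochastic clock and random measure, utility random field). -/
structure Setup (Ω : Type*) [m : MeasurableSpace Ω] where
  /-- the probability measure -/
  P : MeasureTheory.Measure Ω
  prob : MeasureTheory.IsProbabilityMeasure P
  /-- the filtration -/
  F : MeasureTheory.Filtration ℝ≥0 m
  /-- usual conditions: right-continuity of the filtration -/
  F_rightContinuous : ∀ t : ℝ≥0, F t = ⨅ (s : ℝ≥0) (_ : t < s), F s
  /-- usual conditions: `F 0` (hence every `F t`) contains all `P`-null sets -/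
  F_complete : ∀ s : Set Ω, P s = 0 → MeasurableSet[F 0] s
  /-- the stochastic clock -/
  A : Ω → ℝ≥0 → ℝ
  A_zero : ∀ ω, A ω 0 = 0
  A_cont : ∀ ω, Continuous (A ω)
  A_strictMono : ∀ ω, StrictMono (A ω)
  A_adapted : MeasureTheory.Adapted F fun t ω => A ω t
  /-- the associated random measure `μ(ω, dt) = dA(ω, t)` as a kernel -/
  μ : ProbabilityTheory.Kernel Ω ℝ≥0
  μ_sfinite : ProbabilityTheory.IsSFiniteKernel μ
  μ_Iic : ∀ ω (t : ℝ≥0), μ ω (Set.Iic t) = ENNReal.ofReal (A ω t)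
  /-- finite expected total mass -/
  μ_mass : (∫⁻ ω, μ ω Set.univ ∂P) ≠ ∞
  /-- the utility random field `U_t(ω, c)` -/
  U : Ω → ℝ≥0 → ℝ → ℝ
  /-- its marginal utility (derivative in `c` on `(0,∞)`) -/
  U' : Ω → ℝ≥0 → ℝ → ℝ
  U_zero : ∀ ω t, U ω t 0 = 0
  U_nonneg : ∀ ω t c, 0 ≤ c → 0 ≤ U ω t c
  U_strictConcave : ∀ ω t, StrictConcaveOn ℝ (Set.Ici 0) (U ω t)
  U_strictMono : ∀ ω t, StrictMonoOn (U ω t) (Set.Ici 0)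
  U_deriv : ∀ ω t c, 0 < c → HasDerivAt (U ω t) (U' ω t c) c
  U'_cont : ∀ ω t, ContinuousOn (U' ω t) (Set.Ioi 0)
  U'_pos : ∀ ω t c, 0 < c → 0 < U' ω t c
  /-- Inada condition at `0` -/
  U'_inada_zero : ∀ ω t, Filter.Tendsto (U' ω t) (nhdsWithin 0 (Set.Ioi 0)) Filter.atTop
  /-- Inada condition at `∞` -/
  U'_inada_infty : ∀ ω t, Filter.Tendsto (U' ω t) Filter.atTop (nhds 0)
  /-- progressive measurability of the random field -/
  U_prog : ∀ c : ℝ, MeasureTheory.ProgMeasurable F fun t ω => U ω t c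
  U_int : ∀ c : ℝ, 0 ≤ c → (∫⁻ ω, ∫⁻ t, ENNReal.ofReal (U ω t c) ∂(μ ω) ∂P) ≠ ∞
  /-- asymptotic elasticity uniformly less than one -/
  elasticity : ∃ γ : ℝ, 0 < γ ∧ γ < 1 ∧ ∃ Cγ : Ω → ℝ≥0 → ℝ,
    (MeasureTheory.ProgMeasurable F fun t ω => Cγ ω t) ∧ (∀ ω t, 0 ≤ Cγ ω t) ∧
    ((∫⁻ ω, ∫⁻ t, ENNReal.ofReal (U ω t (Cγ ω t)) ∂(μ ω) ∂P) ≠ ∞) ∧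
    ∀ ω t c, Cγ ω t < c → c * U' ω t c < γ * U ω t c

variable {Ω : Type*} [MeasurableSpace Ω]

/-- The class `𝓒` of controls: nonnegative (possibly infinite) adapted processes with
nondecreasing left-continuous paths starting at `0`. -/
def IsControl (S : Setup Ω) (C : Ω → ℝ≥0 → ℝ≥0∞) : Prop :=
  (∀ ω, Monotone (C ω)) ∧ (∀ ω, C ω 0 = 0) ∧
  (∀ ω (t : ℝ≥0), Filter.Tendsto (C ω) (nhdsWithin t (Set.Iio t)) (nhds (C ω t))) ∧
  MeasureTheory.Adapted S.F fun t ω => C ω t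

/-- The class `𝓓` of dual variables: nonnegative (possibly infinite) measurable processes
with nonincreasing right-continuous paths (the value at `t = ∞` is `0` by convention). -/
def IsDual (_S : Setup Ω) (D : Ω → ℝ≥0 → ℝ≥0∞) : Prop :=
  (∀ ω, Antitone (D ω)) ∧
  (∀ ω (t : ℝ≥0), Filter.Tendsto (D ω) (nhdsWithin t (Set.Ioi t)) (nhds (D ω t))) ∧
  Measurable (Function.uncurry D)

/-- The pairing `𝔼⟨C,D⟩ = 𝔼 ∫_{[0,∞)} D_t dC_t`, expressed via the layer-cake formula
(see the module docstring). -/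
def pairing (S : Setup Ω) (C D : Ω → ℝ≥0 → ℝ≥0∞) : ℝ≥0∞ :=
  ∫⁻ ω, (∫⁻ y in Set.Ioi (0 : ℝ),
    ⨆ (t : ℝ≥0) (_ : ENNReal.ofReal y < D ω t), C ω t) ∂S.P

/-- The utility field extended to consumption values in `[0,∞]` (monotone extension,
`U_t(∞) = lim_{c→∞} U_t(c)`). -/
def Uext (S : Setup Ω) (ω : Ω) (t : ℝ≥0) (c : ℝ≥0∞) : ℝ≥0∞ :=
  ⨆ (q : ℝ≥0) (_ : (q : ℝ≥0∞) ≤ c), ENNReal.ofReal (S.U ω t q)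

/-- The utility functional `𝕌(C) = 𝔼 ∫_0^∞ U_t(C_t) dμ_t`. -/
def Uval (S : Setup Ω) (C : Ω → ℝ≥0 → ℝ≥0∞) : ℝ≥0∞ :=
  ∫⁻ ω, ∫⁻ t, Uext S ω t (C ω t) ∂(S.μ ω) ∂S.P

/-- The conjugate field `V_t(ω,d) = sup_{c ≥ 0} (U_t(ω,c) - c d)`, for `d ∈ [0,∞]`
(nonnegative since `U_t(ω,0) = 0`; `V_t(0) = U_t(∞)`, `V_t(∞) = 0`). -/
def Vval (S : Setup Ω) (ω : Ω) (t : ℝ≥0) (d : ℝ≥0∞) : ℝ≥0∞ :=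
  ⨆ c : ℝ≥0, (ENNReal.ofReal (S.U ω t c) - (c : ℝ≥0∞) * d)

/-- `δ ∈ 𝓓̇(D)`: `δ` is a nonnegative progressively measurable process such that the
optional projection of `∫_·^∞ δ dμ` is dominated by that of `D`, i.e. for every `t`
and every bounded nonnegative `𝓕_t`-measurable `Z`,
`𝔼[Z ∫_t^∞ δ dμ] ≤ 𝔼[Z D_t]`. -/
def InDotD (S : Setup Ω) (D δ : Ω → ℝ≥0 → ℝ≥0∞) : Prop :=
  (MeasureTheory.ProgMeasurable S.F fun t ω => δ ω t) ∧
  ∀ (t : ℝ≥0) (Z : Ω → ℝ≥0∞), Measurable[S.F t] Z → (∃ b : ℝ≥0, ∀ ω, Z ω ≤ b) →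
    (∫⁻ ω, Z ω * ∫⁻ s in Set.Ioi t, δ ω s ∂(S.μ ω) ∂S.P) ≤ ∫⁻ ω, Z ω * D ω t ∂S.P

/-- The dual integral functional `δ ↦ 𝔼 ∫_0^∞ V_t(δ_t) dμ_t`. -/
def Vint (S : Setup Ω) (δ : Ω → ℝ≥0 → ℝ≥0∞) : ℝ≥0∞ :=
  ∫⁻ ω, ∫⁻ t, Vval S ω t (δ ω t) ∂(S.μ ω) ∂S.P

/-- The dual functional `𝕍(D) = inf_{δ ∈ 𝓓̇(D)} 𝔼 ∫_0^∞ V_t(δ_t) dμ_t`. -/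
def Vfun (S : Setup Ω) (D : Ω → ℝ≥0 → ℝ≥0∞) : ℝ≥0∞ :=
  ⨅ (δ : Ω → ℝ≥0 → ℝ≥0∞) (_ : InDotD S D δ), Vint S δ

/-- The marginal utility extended to consumption values in `[0,∞]`:
`U'_t(0) = U'_t(0+) = ∞` and `U'_t(∞) = lim_{c→∞} U'_t(c) = 0`. -/
def U'ext (S : Setup Ω) (ω : Ω) (t : ℝ≥0) (c : ℝ≥0∞) : ℝ≥0∞ :=
  ⨅ (q : ℝ≥0) (_ : 0 < q) (_ : (q : ℝ≥0∞) < c), ENNReal.ofReal (S.U' ω t q)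

/-- `-V'_t(ω,d)`, the negative of the derivative of the conjugate field, i.e. the
inverse of the marginal utility: `-V'(d) = sup {c : U'(c) > d}` (`= ∞` for `d = 0`,
`= 0` for `d = ∞`). -/
def negV' (S : Setup Ω) (ω : Ω) (t : ℝ≥0) (d : ℝ≥0∞) : ℝ≥0∞ :=
  ⨆ (c : ℝ≥0) (_ : 0 < c) (_ : d < ENNReal.ofReal (S.U' ω t c)), (c : ℝ≥0∞)

/-- The abstract budget framework of Section 3.2: polar sets `𝓒(1)` and `𝓓(1)`. -/
structure BudgetSetup (Ω : Type*) [m : MeasurableSpace Ω] extends Setup Ω where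
  /-- the budget set `𝓒(1)` -/
  C1 : Set (Ω → ℝ≥0 → ℝ≥0∞)
  /-- the set of state-price deflators `𝓓(1)` -/
  D1 : Set (Ω → ℝ≥0 → ℝ≥0∞)
  C1_ctrl : ∀ C ∈ C1, IsControl toSetup C
  D1_dual : ∀ D ∈ D1, IsDual toSetup D
  /-- `C ∈ 𝓒(1)` iff `𝔼⟨C,D⟩ ≤ 1` for all `D ∈ 𝓓(1)` -/
  C1_polar : ∀ C : Ω → ℝ≥0 → ℝ≥0∞, IsControl toSetup C →
    (C ∈ C1 ↔ ∀ D ∈ D1, pairing toSetup C D ≤ 1)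
  /-- `D ∈ 𝓓(1)` iff `𝔼⟨C,D⟩ ≤ 1` for all `C ∈ 𝓒(1)` -/
  D1_polar : ∀ D : Ω → ℝ≥0 → ℝ≥0∞, IsDual toSetup D →
    (D ∈ D1 ↔ ∀ C ∈ C1, pairing toSetup C D ≤ 1)
  /-- the control `𝟏` (with `𝟏_0 = 0`, `𝟏_t = 1` for `t > 0`) lies in `𝓒(1)` -/
  one_mem : (fun (_ : Ω) (t : ℝ≥0) => if t = 0 then (0 : ℝ≥0∞) else 1) ∈ C1
  /-- `𝓓(1) ≠ {0}` -/
  D1_nontrivial : ∃ D ∈ D1, D ≠ fun (_ : Ω) (_ : ℝ≥0) => (0 : ℝ≥0∞)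

variable {Ω : Type*} [MeasurableSpace Ω]

/-- The budget set `𝓒(x) = x · 𝓒(1)`. -/
def Cset (B : BudgetSetup Ω) (x : ℝ) : Set (Ω → ℝ≥0 → ℝ≥0∞) :=
  {C | ∃ C₀ ∈ B.C1, C = fun ω t => ENNReal.ofReal x * C₀ ω t}

/-- The set of dual variables `𝓓(y) = y · 𝓓(1)`. -/
def Dset (B : BudgetSetup Ω) (y : ℝ) : Set (Ω → ℝ≥0 → ℝ≥0∞) :=
  {D | ∃ D₀ ∈ B.D1, D = fun ω t => ENNReal.ofReal y * D₀ ω t}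

/-- The primal value function `u(x) = sup_{C ∈ 𝓒(x)} 𝕌(C)` (with values in `[0,∞]`). -/
def uE (B : BudgetSetup Ω) (x : ℝ) : ℝ≥0∞ :=
  ⨆ C ∈ Cset B x, Uval B.toSetup C

/-- The dual value function `v(y) = inf_{D ∈ 𝓓(y)} 𝕍(D)` (with values in `[0,∞]`). -/
def vE (B : BudgetSetup Ω) (y : ℝ) : ℝ≥0∞ :=
  ⨅ D ∈ Dset B y, Vfun B.toSetup D

/-- The primal value function, as a real-valued function. -/
def uu (B : BudgetSetup Ω) (x : ℝ) : ℝ := (uE B x).toReal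

/-- The dual value function, as a real-valued function. -/
def vv (B : BudgetSetup Ω) (y : ℝ) : ℝ := (vE B y).toReal

/-- `𝓓̇(y) = ∪_{D ∈ 𝓓(y)} 𝓓̇(D)`. -/
def InDotDy (B : BudgetSetup Ω) (y : ℝ) (δ : Ω → ℝ≥0 → ℝ≥0∞) : Prop :=
  ∃ D ∈ Dset B y, InDotD B.toSetup D δ
/-!
Elasticity below `γ < 1` makes `s ↦ U(s) s^(-γ)` nonincreasing beyond `Cγ`, whence
`U(a c) ≤ a^γ (U(c) + U(Cγ))` for all `a ≥ 1` and `c ≥ 0`. Scaling a control of `𝓒(x₀)` by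
`a = x / x₀` and integrating gives `u(x) ≤ (x / x₀)^γ (u(x₀) + 𝔼 ∫ U(Cγ) dμ)`, so `u(x) = O(x^γ)`,
which is `o(x)`.
-/

theorem antitoneOn_mul_rpow_neg_of_elasticity {U U' : ℝ → ℝ} {γ c : ℝ} (hc : 0 < c)
    (hderiv : ∀ x, c ≤ x → HasDerivAt U (U' x) x)
    (helas : ∀ x, c < x → x * U' x ≤ γ * U x) :
    AntitoneOn (fun x => U (x * c) * x ^ (-γ)) (Ici 1) := by
  have hasDeriv : ∀ x, 1 ≤ x → HasDerivAt (fun x => U (x * c) * x ^ (-γ))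
      (U' (x * c) * c * x ^ (-γ) + U (x * c) * (-γ * x ^ (-γ - 1))) x := fun x hx => by
    have hlin : HasDerivAt (fun y => y * c) c x := by
      simpa using (hasDerivAt_id x).mul_const c
    have hcomp : HasDerivAt (fun x => U (x * c)) (U' (x * c) * c) x :=
      (hderiv (x * c) (le_mul_of_one_le_left hc.le hx)).comp x hlin
    exact hcomp.mul (Real.hasDerivAt_rpow_const (p := -γ) (Or.inl (by positivity)))
  refine antitoneOn_of_hasDerivWithinAt_nonpos (convex_Ici 1)
    (fun x hx => (hasDeriv x hx).continuousAt.continuousWithinAt)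
    (fun x hx => (hasDeriv x (interior_subset hx)).hasDerivWithinAt) fun x hx => ?_
  rw [interior_Ici, mem_Ioi] at hx
  have hx0 : 0 < x := one_pos.trans hx
  have hsplit : x ^ (-γ) = x * x ^ (-γ - 1) := by
    rw [Real.rpow_sub_one hx0.ne', mul_div_cancel₀ _ hx0.ne']
  have helas_x := helas (x * c) (by nlinarith)
  have hpow : 0 < x ^ (-γ - 1) := by positivity
  rw [hsplit]
  nlinarith

theorem le_rpow_mul_of_elasticity {U U' : ℝ → ℝ} {γ c a : ℝ} (hc : 0 < c) (ha : 1 ≤ a)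
    (hderiv : ∀ x, c ≤ x → HasDerivAt U (U' x) x)
    (helas : ∀ x, c < x → x * U' x ≤ γ * U x) :
    U (a * c) ≤ a ^ γ * U c := by
  have h := antitoneOn_mul_rpow_neg_of_elasticity hc hderiv helas (mem_Ici.2 le_rfl)
    (mem_Ici.2 ha) ha
  have ha0 : 0 < a := one_pos.trans_le ha
  simp only [one_mul, Real.one_rpow, mul_one] at h
  calc U (a * c) = a ^ γ * (U (a * c) * a ^ (-γ)) := by
        rw [Real.rpow_neg ha0.le]; field_simp
    _ ≤ a ^ γ * U c := by gcongr

theorem le_rpow_mul_add_of_elasticity {U U' : ℝ → ℝ} {γ C a q r : ℝ} (hγ : 0 ≤ γ)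
    (hmono : MonotoneOn U (Ici 0)) (hnonneg : ∀ x, 0 ≤ x → 0 ≤ U x)
    (hderiv : ∀ x, 0 < x → HasDerivAt U (U' x) x)
    (helas : ∀ x, C < x → x * U' x ≤ γ * U x) (hC : 0 ≤ C) (ha : 1 ≤ a)
    (hq : 0 ≤ q) (hr : 0 ≤ r) (hqr : q ≤ a * r) :
    U q ≤ a ^ γ * (U r + U C) := by
  have haγ : 1 ≤ a ^ γ := Real.one_le_rpow ha hγ
  have hUr := hnonneg r hr
  have hUC := hnonneg C hC
  rcases (le_max_of_le_left hr : 0 ≤ max r C).eq_or_lt with hzero | hpos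
  · obtain ⟨hr0, -⟩ := max_le_iff.1 hzero.ge
    obtain rfl : r = 0 := le_antisymm hr0 hr
    obtain rfl : q = 0 := le_antisymm (by simpa using hqr) hq
    nlinarith
  calc U q ≤ U (a * max r C) :=
        hmono hq (mem_Ici.2 (by positivity)) (hqr.trans (by gcongr; exact le_max_left r C))
    _ ≤ a ^ γ * U (max r C) :=
        le_rpow_mul_of_elasticity hpos ha (fun x hx => hderiv x (hpos.trans_le hx))
          fun x hx => helas x ((le_max_right r C).trans_lt hx)
    _ ≤ a ^ γ * (U r + U C) := by
        gcongr
        rcases max_choice r C with h | h <;> rw [h] <;> linarith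

theorem tendsto_div_atTop_nhds_zero_of_le_rpow {f : ℝ → ℝ} {M γ : ℝ} (hγ : γ < 1)
    (hf₀ : ∀ᶠ x in atTop, 0 ≤ f x) (hf : ∀ᶠ x in atTop, f x ≤ M * x ^ γ) :
    Tendsto (fun x => f x / x) atTop (𝓝 0) := by
  have hlim : Tendsto (fun x : ℝ => M * x ^ (γ - 1)) atTop (𝓝 0) := by
    simpa [neg_sub] using (tendsto_rpow_neg_atTop (y := 1 - γ) (by linarith)).const_mul M
  refine tendsto_of_tendsto_of_tendsto_of_le_of_le' tendsto_const_nhds hlim ?_ ?_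
  · filter_upwards [hf₀, eventually_gt_atTop 0] with x hx hx0 using div_nonneg hx hx0.le
  · filter_upwards [hf, eventually_gt_atTop 0] with x hx hx0
    rw [Real.rpow_sub_one hx0.ne', mul_div_assoc']
    gcongr

theorem MeasureTheory.IsStronglyProgressive.measurable_uncurry {Ω β : Type*}
    {m : MeasurableSpace Ω} [TopologicalSpace β] [TopologicalSpace.PseudoMetrizableSpace β]
    [MeasurableSpace β] [BorelSpace β]
    {F : Filtration ℝ≥0 m} {u : ℝ≥0 → Ω → β} (hu : IsStronglyProgressive F u) :
    Measurable (Function.uncurry u) := by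
  have hstopped : ∀ n : ℕ, Measurable fun p : ℝ≥0 × Ω => u (min p.1 n) p.2 := fun n =>
    (hu n).measurable.comp <|
      ((measurable_fst.min measurable_const).subtype_mk
        (h := fun _ => min_le_right _ (n : ℝ≥0))).prodMk
        fun s hs => measurable_snd (F.le _ s hs)
  refine measurable_of_tendsto_metrizable' atTop hstopped (tendsto_pi_nhds.2 fun p => ?_)
  refine tendsto_atTop_of_eventually_const (i₀ := ⌈p.1⌉₊) fun n hn => ?_
  rw [min_eq_left (Nat.ceil_le.1 hn)]
  rfl

theorem le_iSup_rat_of_continuousWithinAt {α : Type*} [CompleteLinearOrder α] [TopologicalSpace α]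
    [OrderTopology α] {f : ℝ → α} {a c : ℝ} (hac : a < c)
    (hf : ContinuousWithinAt f (Iio c) c) :
    f c ≤ ⨆ (q : ℚ) (_ : a < q ∧ (q : ℝ) < c), f q := by
  refine le_of_forall_lt fun b hb => ?_
  obtain ⟨l, hl, hsub⟩ :=
    (mem_nhdsLT_iff_exists_Ioo_subset' hac).1 (hf.eventually (lt_mem_nhds hb))
  obtain ⟨q, hlq, hqc⟩ := exists_rat_btwn (max_lt hl hac)
  obtain ⟨hlq, haq⟩ := max_lt_iff.1 hlq
  exact (hsub ⟨hlq, hqc⟩).trans_le (le_iSup₂_of_le q ⟨haq, hqc⟩ le_rfl)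

namespace Setup

variable (S : Setup Ω)

/-- `U` is only assumed measurable in `(ω, t)` for each fixed `c`; this countable representation
makes `(ω, t) ↦ U_t(ω, C_t(ω))` measurable. -/
theorem ofReal_U_eq_iSup_rat (ω : Ω) (t : ℝ≥0) {c : ℝ} (hc : 0 ≤ c) :
    ENNReal.ofReal (S.U ω t c) =
      ⨆ (q : ℚ) (_ : 0 < (q : ℝ) ∧ (q : ℝ) < c), ENNReal.ofReal (S.U ω t q) := by
  rcases hc.eq_or_lt with rfl | hc
  · rw [S.U_zero, ENNReal.ofReal_zero]
    exact (iSup₂_eq_bot.2 fun q hq => absurd hq.2 hq.1.not_gt).symm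
  refine le_antisymm
    (le_iSup_rat_of_continuousWithinAt (f := fun x => ENNReal.ofReal (S.U ω t x)) hc ?_)
    (iSup₂_le fun q hq => ?_)
  · exact (ENNReal.continuous_ofReal.continuousAt.comp
      (S.U_deriv ω t c hc).continuousAt).continuousWithinAt
  · exact ENNReal.ofReal_le_ofReal <|
      (S.U_strictMono ω t).monotoneOn hq.1.le (hq.1.trans hq.2).le hq.2.le

theorem measurable_ofReal_U_comp {C : Ω → ℝ≥0 → ℝ}
    (hC : IsStronglyProgressive S.F fun t ω => C ω t) (hC0 : ∀ ω t, 0 ≤ C ω t) :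
    Measurable fun p : Ω × ℝ≥0 => ENNReal.ofReal (S.U p.1 p.2 (C p.1 p.2)) := by
  have hCmeas : Measurable fun p : Ω × ℝ≥0 => C p.1 p.2 :=
    hC.measurable_uncurry.comp measurable_swap
  simp_rw [S.ofReal_U_eq_iSup_rat _ _ (hC0 _ _), iSup_eq_if]
  refine Measurable.iSup fun q => Measurable.ite ?_ ?_ measurable_const
  · exact (MeasurableSet.const _).inter (measurableSet_lt measurable_const hCmeas)
  · exact ENNReal.measurable_ofReal.comp
      ((S.U_prog q).measurable_uncurry.comp measurable_swap)

theorem Uext_ofReal_mul_le {γ Cγ a : ℝ} (hγ : 0 ≤ γ) (hCγ : 0 ≤ Cγ) (ha : 1 ≤ a) {ω : Ω}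
    {t : ℝ≥0} (helas : ∀ c, Cγ < c → c * S.U' ω t c ≤ γ * S.U ω t c) (c : ℝ≥0∞) :
    Uext S ω t (ENNReal.ofReal a * c) ≤
      ENNReal.ofReal (a ^ γ) * (Uext S ω t c + ENNReal.ofReal (S.U ω t Cγ)) := by
  refine iSup₂_le fun q hq => ?_
  obtain ⟨r, hrc, hqr⟩ : ∃ r : ℝ≥0, (r : ℝ≥0∞) ≤ c ∧ (q : ℝ) ≤ a * r := by
    rcases eq_or_ne c ∞ with rfl | hc
    · exact ⟨q, le_top, le_mul_of_one_le_left q.2 ha⟩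
    · refine ⟨c.toNNReal, ENNReal.coe_toNNReal_le_self, ?_⟩
      rw [← ENNReal.ofReal_le_ofReal_iff (by positivity), ENNReal.ofReal_mul (by linarith)]
      simpa [ENNReal.coe_toNNReal hc] using hq
  have hreal : S.U ω t q ≤ a ^ γ * (S.U ω t r + S.U ω t Cγ) :=
    le_rpow_mul_add_of_elasticity hγ (S.U_strictMono ω t).monotoneOn
      (S.U_nonneg ω t) (S.U_deriv ω t) helas hCγ ha q.2 r.2 hqr
  calc ENNReal.ofReal (S.U ω t q)
      ≤ ENNReal.ofReal (a ^ γ) *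
          (ENNReal.ofReal (S.U ω t r) + ENNReal.ofReal (S.U ω t Cγ)) := by
        rw [← ENNReal.ofReal_add (S.U_nonneg ω t r r.2) (S.U_nonneg ω t Cγ hCγ),
          ← ENNReal.ofReal_mul (by positivity)]
        exact ENNReal.ofReal_le_ofReal hreal
    _ ≤ ENNReal.ofReal (a ^ γ) * (Uext S ω t c + ENNReal.ofReal (S.U ω t Cγ)) := by
        gcongr
        exact le_iSup₂_of_le r hrc le_rfl

theorem Uval_ofReal_mul_le {γ a : ℝ} (hγ : 0 ≤ γ) (ha : 1 ≤ a) {Cγ : Ω → ℝ≥0 → ℝ}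
    (hCγ : IsStronglyProgressive S.F fun t ω => Cγ ω t) (hCγ0 : ∀ ω t, 0 ≤ Cγ ω t)
    (helas : ∀ ω t c, Cγ ω t < c → c * S.U' ω t c ≤ γ * S.U ω t c)
    (C : Ω → ℝ≥0 → ℝ≥0∞) :
    Uval S (fun ω t => ENNReal.ofReal a * C ω t) ≤
      ENNReal.ofReal (a ^ γ) *
        (Uval S C + ∫⁻ ω, ∫⁻ t, ENNReal.ofReal (S.U ω t (Cγ ω t)) ∂S.μ ω ∂S.P) := by
  have := S.μ_sfinite
  have hK := S.measurable_ofReal_U_comp hCγ hCγ0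
  calc Uval S (fun ω t => ENNReal.ofReal a * C ω t)
      ≤ ∫⁻ ω, ∫⁻ t, ENNReal.ofReal (a ^ γ) *
          (Uext S ω t (C ω t) + ENNReal.ofReal (S.U ω t (Cγ ω t))) ∂S.μ ω ∂S.P :=
        lintegral_mono fun ω => lintegral_mono fun t =>
          S.Uext_ofReal_mul_le hγ (hCγ0 ω t) ha (helas ω t) (C ω t)
    _ = ENNReal.ofReal (a ^ γ) *
          (Uval S C + ∫⁻ ω, ∫⁻ t, ENNReal.ofReal (S.U ω t (Cγ ω t)) ∂S.μ ω ∂S.P) := by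
        have hinner : ∀ ω, ∫⁻ t, ENNReal.ofReal (a ^ γ) *
            (Uext S ω t (C ω t) + ENNReal.ofReal (S.U ω t (Cγ ω t))) ∂S.μ ω =
            ENNReal.ofReal (a ^ γ) * (∫⁻ t, Uext S ω t (C ω t) ∂S.μ ω +
              ∫⁻ t, ENNReal.ofReal (S.U ω t (Cγ ω t)) ∂S.μ ω) := fun ω => by
          have hKω : Measurable fun t => ENNReal.ofReal (S.U ω t (Cγ ω t)) :=
            hK.comp measurable_prodMk_left
          rw [lintegral_const_mul' _ _ ENNReal.ofReal_ne_top, lintegral_add_right _ hKω]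
        rw [lintegral_congr fun ω => hinner ω, lintegral_const_mul' _ _ ENNReal.ofReal_ne_top,
          lintegral_add_right _ hK.lintegral_kernel_prod_right, Uval]

end Setup

theorem BudgetSetup.uE_le_rpow_mul (B : BudgetSetup Ω) {γ x₀ x : ℝ} (hγ : 0 ≤ γ)
    (hx₀ : 0 < x₀) (hx : x₀ ≤ x) {Cγ : Ω → ℝ≥0 → ℝ}
    (hCγ : IsStronglyProgressive B.F fun t ω => Cγ ω t) (hCγ0 : ∀ ω t, 0 ≤ Cγ ω t)
    (helas : ∀ ω t c, Cγ ω t < c → c * B.U' ω t c ≤ γ * B.U ω t c) :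
    uE B x ≤ ENNReal.ofReal ((x / x₀) ^ γ) *
      (uE B x₀ + ∫⁻ ω, ∫⁻ t, ENNReal.ofReal (B.U ω t (Cγ ω t)) ∂B.μ ω ∂B.P) := by
  refine iSup₂_le fun C ⟨C₀, hC₀, hC⟩ => ?_
  have hscale : C = fun ω t => ENNReal.ofReal (x / x₀) * (ENNReal.ofReal x₀ * C₀ ω t) := by
    rw [hC]
    ext ω t
    rw [← mul_assoc, ← ENNReal.ofReal_mul (div_nonneg (hx₀.le.trans hx) hx₀.le),
      div_mul_cancel₀ x hx₀.ne']
  rw [hscale]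
  refine (B.Uval_ofReal_mul_le hγ ((one_le_div hx₀).2 hx) hCγ hCγ0 helas _).trans ?_
  gcongr
  exact le_iSup₂_of_le _ ⟨C₀, hC₀, rfl⟩ le_rfl

/-- the primal value function grows sublinearly,
`lim_{x→∞} u(x)/x = 0`. -/
theorem statement10 (B : BudgetSetup Ω) (hfin : ∃ x₀ : ℝ, 0 < x₀ ∧ uE B x₀ ≠ ∞) :
    Filter.Tendsto (fun x : ℝ => uu B x / x) Filter.atTop (nhds 0) := by
  obtain ⟨x₀, hx₀, hu₀⟩ := hfin
  obtain ⟨γ, hγ0, hγ1, Cγ, hCγ, hCγ0, hKfin, helas⟩ := B.elasticity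
  set M := uE B x₀ + ∫⁻ ω, ∫⁻ t, ENNReal.ofReal (B.U ω t (Cγ ω t)) ∂B.μ ω ∂B.P
  have hM : M ≠ ∞ := ENNReal.add_ne_top.2 ⟨hu₀, hKfin⟩
  refine tendsto_div_atTop_nhds_zero_of_le_rpow (M := M.toReal / x₀ ^ γ) hγ1
    (.of_forall fun x => ENNReal.toReal_nonneg) ?_
  filter_upwards [eventually_ge_atTop x₀] with x hx
  have hx0 : 0 ≤ x := hx₀.le.trans hx
  have hbound := B.uE_le_rpow_mul hγ0.le hx₀ hx hCγ hCγ0 fun ω t c h => (helas ω t c h).le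
  calc uu B x ≤ (x / x₀) ^ γ * M.toReal := by
        have := ENNReal.toReal_mono (ENNReal.mul_ne_top ENNReal.ofReal_ne_top hM) hbound
        rwa [ENNReal.toReal_mul, ENNReal.toReal_ofReal (by positivity)] at this
    _ = M.toReal / x₀ ^ γ * x ^ γ := by
        rw [Real.div_rpow hx0 hx₀.le]
        ring
end
end

section
/- The pairing is separately lower-semicontinuous with respect to dist-convergence: if C, C¹, C², … ∈ 𝓒 with dist(Cⁿ, C) → 0, then for every D ∈ 𝓓, liminf_n 𝔼⟨Cⁿ, D⟩ ≥ 𝔼⟨C, D⟩; and symmetrically, if D, D¹, D², … ∈ 𝓓 with dist(Dⁿ, D) → 0, then for every C ∈ 𝓒, liminf_n 𝔼⟨C, Dⁿ⟩ ≥ 𝔼⟨C, D⟩. -/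
/-!
Framework for "Convex duality for stochastic singular control problems"
by Bank and Kauppila.

* Time is indexed by `ℝ≥0`, i.e. `[0,∞)`; the value of a control at `t = ∞` is its
  supremum over `ℝ≥0` (controls are nondecreasing and left-continuous, so this is
  the left-continuous extension to `[0,∞]`), and the value `D_∞ = 0` of a dual
  variable at `∞` is a convention that does not enter any of the quantities below.
* `Setup` bundles the filtered probability space (with the usual conditions),
  the stochastic clock `A` together with its associated random measure (a kernel)
  `μ`, and the utility random field `U` with marginal utility `U'` satisfying
  Assumption 1 of the paper.
* The pairing `𝔼⟨C,D⟩ = 𝔼 ∫_{[0,∞)} D_t dC_t` is expressed by the layer-cake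
  formula: for a left-continuous nondecreasing `C` with `C_0 = 0`, and a
  right-continuous nonincreasing `D`, one has
  `∫_{[0,∞)} D_t dC_t = ∫_0^∞ (dC-measure of {t : D_t > y}) dy`, and the
  `dC`-measure of the set `{t : D_t > y}` (an interval of the form `[0,s)`,
  possibly `[0,∞)`) equals `sup {C_t : D_t > y}`.
-/

open MeasureTheory Filter Set
open scoped ENNReal NNReal Topology

noncomputable section

variable {Ω : Type*} [MeasurableSpace Ω]

/-- The distance `dist(X,Y) = 𝔼 ∫_0^∞ |h(X_t) - h(Y_t)| dμ_t` on processes, for a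
fixed homeomorphism `h` of `[0,∞]` onto a subset of `[0,1]` (the restriction of a
homeomorphism `[-∞,∞] → [0,1]`). -/
def distE (S : Setup Ω) (h : ℝ≥0∞ → ℝ) (X Y : Ω → ℝ≥0 → ℝ≥0∞) : ℝ≥0∞ :=
  ∫⁻ ω, ∫⁻ t, ENNReal.ofReal |h (X ω t) - h (Y ω t)| ∂(S.μ ω) ∂S.P

/-!
In layer-cake form the integrand of `𝔼⟨C,D⟩` at level `y` is `sup {C_t : D_t > y}`, a supremum
of a left-continuous nondecreasing path over a lower set of times; it is therefore unchanged when
the times are restricted to any dense set. The clock measure charges every interval, so paths that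
converge `dμ`-a.e. converge on a dense set of times, and the integrand is then lower
semicontinuous in `C` and in `D`. Convergence in `dist` yields such a.e. convergence along a
subsequence of any subsequence, and Fatou's lemma in `y` and in `ω` concludes.
-/

open ProbabilityTheory

theorem Monotone.biSup_inter_dense_eq {α β : Type*} [LinearOrder α] [OrderBot α]
    [TopologicalSpace α] [OrderTopology α] [DenselyOrdered α]
    [CompleteLinearOrder β] [TopologicalSpace β] [OrderTopology β] {f : α → β}
    (hf : Monotone f) (hbot : f ⊥ = ⊥) (hlc : ∀ t, Tendsto f (𝓝[<] t) (𝓝 (f t)))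
    {L N : Set α} (hL : IsLowerSet L) (hN : Dense N) :
    ⨆ t ∈ L ∩ N, f t = ⨆ t ∈ L, f t := by
  refine le_antisymm (biSup_mono fun _ ht => ht.1) (iSup₂_le fun t ht => ?_)
  rcases eq_bot_or_bot_lt t with rfl | ht0
  · simp [hbot]
  have : (𝓝[<] t).NeBot := nhdsLT_neBot_of_exists_lt ⟨⊥, ht0⟩
  rw [tendsto_nhds_unique (hlc t) (hf.tendsto_nhdsLT t)]
  refine sSup_le ?_
  rintro _ ⟨r, hr, rfl⟩
  obtain ⟨u, huN, hru, hut⟩ := hN.exists_between hr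
  exact (hf hru.le).trans (le_iSup₂_of_le u ⟨hL hut.le ht, huN⟩ le_rfl)

theorem le_liminf_of_forall_tendsto_exists_subseq {α : Type*} [CompleteLinearOrder α]
    [TopologicalSpace α] [OrderTopology α] [FirstCountableTopology α] {u : ℕ → α} {a : α}
    (h : ∀ x : ℕ → ℕ, Tendsto x atTop atTop →
      ∃ ρ : ℕ → ℕ, StrictMono ρ ∧ a ≤ liminf (fun k => u (x (ρ k))) atTop) :
    a ≤ liminf u atTop := by
  obtain ⟨x, hux, hx⟩ := exists_seq_tendsto_liminf (f := atTop) (u := u)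
  obtain ⟨ρ, hρ, ha⟩ := h x hx
  exact ha.trans_eq (hux.comp hρ.tendsto_atTop).liminf_eq

theorem exists_subseq_ae_ae_tendsto_of_tendsto_lintegral {α β E : Type*} [MeasurableSpace α]
    [MeasurableSpace β] [TopologicalSpace E] [MeasurableSpace E] [OpensMeasurableSpace E]
    {P : Measure α} [SFinite P] {κ : Kernel α β}
    [IsSFiniteKernel κ] {h : E → ℝ} (hh : Topology.IsEmbedding h)
    {X : ℕ → α → β → E} {Y : α → β → E}
    (hX : ∀ n, Measurable (Function.uncurry (X n))) (hY : Measurable (Function.uncurry Y))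
    (hlim : Tendsto (fun n => ∫⁻ a, ∫⁻ b, ENNReal.ofReal |h (X n a b) - h (Y a b)| ∂κ a ∂P)
      atTop (𝓝 0)) :
    ∃ ρ : ℕ → ℕ, StrictMono ρ ∧
      ∀ᵐ a ∂P, ∀ᵐ b ∂κ a, Tendsto (fun k => X (ρ k) a b) atTop (𝓝 (Y a b)) := by
  have hm : ∀ Z : α → β → E, Measurable (Function.uncurry Z) →
      Measurable (h ∘ Function.uncurry Z) := fun Z hZ => hh.continuous.measurable.comp hZ
  have hconv : TendstoInMeasure (P ⊗ₘ κ) (fun n => h ∘ Function.uncurry (X n)) atTop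
      (h ∘ Function.uncurry Y) := by
    refine tendstoInMeasure_of_tendsto_eLpNorm one_ne_zero
      (fun n => (hm _ (hX n)).aestronglyMeasurable) (hm _ hY).aestronglyMeasurable ?_
    convert hlim using 2 with n
    rw [eLpNorm_one_eq_lintegral_enorm,
      Measure.lintegral_compProd ((hm _ (hX n)).sub (hm _ hY)).enorm]
    simp [Real.enorm_eq_ofReal_abs]
  obtain ⟨ρ, hρ, hae⟩ := hconv.exists_seq_tendsto_ae
  exact ⟨ρ, hρ, (Measure.ae_ae_of_ae_compProd hae).mono fun a ha =>
    ha.mono fun b hb => hh.tendsto_nhds_iff.2 hb⟩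

theorem isOpenPosMeasure_of_measure_Iic_eq {ν : Measure ℝ≥0} {A : ℝ≥0 → ℝ} (hA0 : 0 ≤ A 0)
    (hA : StrictMono A) (hν : ∀ t, ν (Iic t) = ENNReal.ofReal (A t)) : ν.IsOpenPosMeasure := by
  refine ⟨fun U hU ⟨a, ha⟩ hU0 => ?_⟩
  obtain ⟨b, hab, hbU⟩ := exists_Ico_subset_of_mem_nhds (hU.mem_nhds ha) ⟨a + 1, by simp⟩
  obtain ⟨m, ham, hmb⟩ := exists_between hab
  have hnull : ν (Ioc a m) = 0 :=
    measure_mono_null (fun t ht => hbU ⟨ht.1.le, ht.2.trans_lt hmb⟩) hU0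
  have hle : ν (Iic m) ≤ ν (Iic a) + ν (Ioc a m) := by
    rw [← Iic_union_Ioc_eq_Iic ham.le]
    exact measure_union_le _ _
  rw [hnull, add_zero, hν, hν, ENNReal.ofReal_le_ofReal_iff (hA0.trans (hA.monotone zero_le))]
    at hle
  exact (hA ham).not_ge hle

/-- `pairing S C D` unfolds to `∫⁻ ω, ∫⁻ y in Ioi 0, levelSup (C ω) (D ω) y ∂S.P`. -/
def levelSup (c d : ℝ≥0 → ℝ≥0∞) (y : ℝ) : ℝ≥0∞ :=
  ⨆ (t : ℝ≥0) (_ : ENNReal.ofReal y < d t), c t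

section Paths

variable {c d : ℝ≥0 → ℝ≥0∞} {N : Set ℝ≥0}

theorem levelSup_eq_biSup_inter_dense (hc : Monotone c) (hc0 : c 0 = 0)
    (hlc : ∀ t, Tendsto c (𝓝[<] t) (𝓝 (c t))) (hd : Antitone d) (hN : Dense N) (y : ℝ) :
    levelSup c d y = ⨆ t ∈ {t | ENNReal.ofReal y < d t} ∩ N, c t :=
  (hc.biSup_inter_dense_eq (L := {t | ENNReal.ofReal y < d t}) hc0 hlc
    (fun _ _ hts ht => lt_of_lt_of_le ht (hd hts)) hN).symm

theorem levelSup_le_liminf_of_tendsto_left (hc : Monotone c) (hc0 : c 0 = 0)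
    (hlc : ∀ t, Tendsto c (𝓝[<] t) (𝓝 (c t))) (hd : Antitone d) (hN : Dense N)
    {cn : ℕ → ℝ≥0 → ℝ≥0∞} (hconv : ∀ t ∈ N, Tendsto (fun k => cn k t) atTop (𝓝 (c t)))
    (y : ℝ) : levelSup c d y ≤ liminf (fun k => levelSup (cn k) d y) atTop := by
  rw [levelSup_eq_biSup_inter_dense hc hc0 hlc hd hN]
  refine iSup₂_le fun t ⟨ht, htN⟩ => ?_
  rw [← (hconv t htN).liminf_eq]
  exact liminf_le_liminf (Eventually.of_forall fun k =>
    le_iSup₂ (f := fun t (_ : ENNReal.ofReal y < d t) => cn k t) t ht)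

theorem levelSup_le_liminf_of_tendsto_right (hc : Monotone c) (hc0 : c 0 = 0)
    (hlc : ∀ t, Tendsto c (𝓝[<] t) (𝓝 (c t))) (hd : Antitone d) (hN : Dense N)
    {dn : ℕ → ℝ≥0 → ℝ≥0∞} (hconv : ∀ t ∈ N, Tendsto (fun k => dn k t) atTop (𝓝 (d t)))
    (y : ℝ) : levelSup c d y ≤ liminf (fun k => levelSup c (dn k) y) atTop := by
  rw [levelSup_eq_biSup_inter_dense hc hc0 hlc hd hN]
  refine iSup₂_le fun t ⟨ht, htN⟩ => le_liminf_of_le (by isBoundedDefault) ?_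
  filter_upwards [(hconv t htN).eventually_const_lt ht] with k hk
  exact le_iSup₂ (f := fun t (_ : ENNReal.ofReal y < dn k t) => c t) t hk

end Paths

theorem Measurable.iSup_mem {δ : Type*} [MeasurableSpace δ] {s : Set δ} {f : δ → ℝ≥0∞}
    (hs : MeasurableSet s) (hf : Measurable f) : Measurable fun x => ⨆ _ : x ∈ s, f x := by
  classical
  simp_rw [iSup_eq_if]
  exact hf.ite hs measurable_const

section Processes

variable {S : Setup Ω} {C D : Ω → ℝ≥0 → ℝ≥0∞}

theorem IsControl.measurable_apply (hC : IsControl S C) (t : ℝ≥0) :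
    Measurable fun ω => C ω t :=
  (hC.2.2.2 t).mono (S.F.le t) le_rfl

theorem IsDual.measurable_apply (hD : IsDual S D) (t : ℝ≥0) : Measurable fun ω => D ω t :=
  hD.2.2.comp measurable_prodMk_right

theorem IsControl.measurable_uncurry (hC : IsControl S C) :
    Measurable (Function.uncurry C) := by
  obtain ⟨N, hNc, hN⟩ := TopologicalSpace.exists_countable_dense ℝ≥0
  have hrep : ∀ p : Ω × ℝ≥0,
      C p.1 p.2 = ⨆ t ∈ N, ⨆ _ : p ∈ {p : Ω × ℝ≥0 | t ≤ p.2}, C p.1 t := by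
    intro p
    have hIic : ⨆ t ∈ Iic p.2, C p.1 t = C p.1 p.2 :=
      le_antisymm (iSup₂_le fun _ ht => hC.1 p.1 ht) (le_iSup₂_of_le p.2 (mem_Iic.2 le_rfl) le_rfl)
    rw [← hIic, ← (hC.1 p.1).biSup_inter_dense_eq (hC.2.1 p.1) (hC.2.2.1 p.1)
      (isLowerSet_Iic p.2) hN, inter_comm]
    simp only [mem_inter_iff, iSup_and, mem_Iic, mem_ofPred_eq]
  rw [show Function.uncurry C = _ from funext hrep]
  refine .biSup N hNc fun t _ => .iSup_mem ?_ ((hC.measurable_apply t).comp measurable_fst)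
  exact measurableSet_le measurable_const measurable_snd

theorem measurable_levelSup (hC : IsControl S C) (hD : IsDual S D) :
    Measurable fun p : Ω × ℝ => levelSup (C p.1) (D p.1) p.2 := by
  obtain ⟨N, hNc, hN⟩ := TopologicalSpace.exists_countable_dense ℝ≥0
  have hrep : ∀ p : Ω × ℝ, levelSup (C p.1) (D p.1) p.2 =
      ⨆ t ∈ N, ⨆ _ : p ∈ {p : Ω × ℝ | ENNReal.ofReal p.2 < D p.1 t}, C p.1 t := by
    intro p
    rw [levelSup_eq_biSup_inter_dense (hC.1 p.1) (hC.2.1 p.1) (hC.2.2.1 p.1) (hD.1 p.1) hN,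
      inter_comm]
    simp only [mem_inter_iff, iSup_and, mem_ofPred_eq]
  simp_rw [hrep]
  refine .biSup N hNc fun t _ => .iSup_mem ?_ ((hC.measurable_apply t).comp measurable_fst)
  exact measurableSet_lt (ENNReal.measurable_ofReal.comp measurable_snd)
    ((hD.measurable_apply t).comp measurable_fst)

theorem Setup.dense_of_ae (S : Setup Ω) (ω : Ω) {p : ℝ≥0 → Prop} (hp : ∀ᵐ t ∂S.μ ω, p t) :
    Dense {t | p t} :=
  have := isOpenPosMeasure_of_measure_Iic_eq (S.A_zero ω).ge (S.A_strictMono ω) (S.μ_Iic ω)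
  Measure.dense_of_ae hp

theorem Setup.exists_subseq_ae_tendsto_of_distE (S : Setup Ω) {h : ℝ≥0∞ → ℝ}
    (hcont : Continuous h) (hinj : Function.Injective h) {Xn : ℕ → Ω → ℝ≥0 → ℝ≥0∞}
    {X : Ω → ℝ≥0 → ℝ≥0∞} (hXn : ∀ n, Measurable (Function.uncurry (Xn n)))
    (hX : Measurable (Function.uncurry X))
    (hdist : Tendsto (fun n => distE S h (Xn n) X) atTop (𝓝 0)) :
    ∃ ρ : ℕ → ℕ, StrictMono ρ ∧
      ∀ᵐ ω ∂S.P, ∀ᵐ t ∂S.μ ω, Tendsto (fun k => Xn (ρ k) ω t) atTop (𝓝 (X ω t)) :=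
  have := S.prob
  have := S.μ_sfinite
  exists_subseq_ae_ae_tendsto_of_tendsto_lintegral (hcont.isClosedEmbedding hinj).isEmbedding
    hXn hX hdist

theorem pairing_le_liminf_of_ae_levelSup_le {Cn Dn : ℕ → Ω → ℝ≥0 → ℝ≥0∞}
    (hmeas : ∀ k, Measurable fun p : Ω × ℝ => levelSup (Cn k p.1) (Dn k p.1) p.2)
    (hle : ∀ᵐ ω ∂S.P, ∀ y,
      levelSup (C ω) (D ω) y ≤ liminf (fun k => levelSup (Cn k ω) (Dn k ω) y) atTop) :
    pairing S C D ≤ liminf (fun k => pairing S (Cn k) (Dn k)) atTop :=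
  calc pairing S C D
      ≤ ∫⁻ ω, liminf (fun k => ∫⁻ y in Ioi 0, levelSup (Cn k ω) (Dn k ω) y) atTop ∂S.P :=
        lintegral_mono_ae <| hle.mono fun _ hω => (lintegral_mono hω).trans <|
          lintegral_liminf_le fun k => (hmeas k).comp measurable_prodMk_left
    _ ≤ liminf (fun k => pairing S (Cn k) (Dn k)) atTop :=
        lintegral_liminf_le fun k => (hmeas k).lintegral_prod_right'

theorem pairing_le_liminf_of_ae_tendsto_left {Cn : ℕ → Ω → ℝ≥0 → ℝ≥0∞}
    (hCn : ∀ k, IsControl S (Cn k)) (hC : IsControl S C) (hD : IsDual S D)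
    (hae : ∀ᵐ ω ∂S.P, ∀ᵐ t ∂S.μ ω, Tendsto (fun k => Cn k ω t) atTop (𝓝 (C ω t))) :
    pairing S C D ≤ liminf (fun k => pairing S (Cn k) D) atTop :=
  pairing_le_liminf_of_ae_levelSup_le (Dn := fun _ => D) (fun k => measurable_levelSup (hCn k) hD)
    (hae.mono fun ω hω => levelSup_le_liminf_of_tendsto_left (hC.1 ω) (hC.2.1 ω) (hC.2.2.1 ω)
      (hD.1 ω) (S.dense_of_ae ω hω) fun _ ht => ht)

theorem pairing_le_liminf_of_ae_tendsto_right {Dn : ℕ → Ω → ℝ≥0 → ℝ≥0∞}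
    (hDn : ∀ k, IsDual S (Dn k)) (hD : IsDual S D) (hC : IsControl S C)
    (hae : ∀ᵐ ω ∂S.P, ∀ᵐ t ∂S.μ ω, Tendsto (fun k => Dn k ω t) atTop (𝓝 (D ω t))) :
    pairing S C D ≤ liminf (fun k => pairing S C (Dn k)) atTop :=
  pairing_le_liminf_of_ae_levelSup_le (Cn := fun _ => C) (fun k => measurable_levelSup hC (hDn k))
    (hae.mono fun ω hω => levelSup_le_liminf_of_tendsto_right (hC.1 ω) (hC.2.1 ω) (hC.2.2.1 ω)
      (hD.1 ω) (S.dense_of_ae ω hω) fun _ ht => ht)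

end Processes

theorem statement14_general (S : Setup Ω) (h : ℝ≥0∞ → ℝ)
    (hcont : Continuous h) (hinj : Function.Injective h) :
    (∀ (Cn : ℕ → Ω → ℝ≥0 → ℝ≥0∞) (C : Ω → ℝ≥0 → ℝ≥0∞),
      (∀ n, IsControl S (Cn n)) → IsControl S C →
      Filter.Tendsto (fun n => distE S h (Cn n) C) Filter.atTop (nhds 0) →
      ∀ D : Ω → ℝ≥0 → ℝ≥0∞, IsDual S D →
        pairing S C D ≤ Filter.liminf (fun n => pairing S (Cn n) D) Filter.atTop) ∧
    (∀ (Dn : ℕ → Ω → ℝ≥0 → ℝ≥0∞) (D : Ω → ℝ≥0 → ℝ≥0∞),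
      (∀ n, IsDual S (Dn n)) → IsDual S D →
      Filter.Tendsto (fun n => distE S h (Dn n) D) Filter.atTop (nhds 0) →
      ∀ C : Ω → ℝ≥0 → ℝ≥0∞, IsControl S C →
        pairing S C D ≤ Filter.liminf (fun n => pairing S C (Dn n)) Filter.atTop) := by
  constructor
  · intro Cn C hCn hC hdist D hD
    refine le_liminf_of_forall_tendsto_exists_subseq fun x hx => ?_
    obtain ⟨ρ, hρ, hae⟩ := S.exists_subseq_ae_tendsto_of_distE hcont hinj
      (fun n => (hCn (x n)).measurable_uncurry) hC.measurable_uncurry (hdist.comp hx)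
    exact ⟨ρ, hρ, pairing_le_liminf_of_ae_tendsto_left (fun _ => hCn _) hC hD hae⟩
  · intro Dn D hDn hD hdist C hC
    refine le_liminf_of_forall_tendsto_exists_subseq fun x hx => ?_
    obtain ⟨ρ, hρ, hae⟩ := S.exists_subseq_ae_tendsto_of_distE hcont hinj
      (fun n => (hDn (x n)).2.2) hD.2.2 (hdist.comp hx)
    exact ⟨ρ, hρ, pairing_le_liminf_of_ae_tendsto_right (fun _ => hDn _) hD hC hae⟩

/-- Lemma 11: the pairing `(C,D) ↦ 𝔼⟨C,D⟩` is separately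
lower-semicontinuous with respect to convergence in the metric `dist`:
`dist(Cⁿ,C) → 0` implies `liminf_n 𝔼⟨Cⁿ,D⟩ ≥ 𝔼⟨C,D⟩` for every `D ∈ 𝓓`, and
`dist(Dⁿ,D) → 0` implies `liminf_n 𝔼⟨C,Dⁿ⟩ ≥ 𝔼⟨C,D⟩` for every `C ∈ 𝓒`. -/
theorem statement14 (S : Setup Ω) (h : ℝ≥0∞ → ℝ)
    (hcont : Continuous h) (hinj : Function.Injective h)
    (hrange : ∀ a : ℝ≥0∞, h a ∈ Set.Icc (0 : ℝ) 1) :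
    (∀ (Cn : ℕ → Ω → ℝ≥0 → ℝ≥0∞) (C : Ω → ℝ≥0 → ℝ≥0∞),
      (∀ n, IsControl S (Cn n)) → IsControl S C →
      Filter.Tendsto (fun n => distE S h (Cn n) C) Filter.atTop (nhds 0) →
      ∀ D : Ω → ℝ≥0 → ℝ≥0∞, IsDual S D →
        pairing S C D ≤ Filter.liminf (fun n => pairing S (Cn n) D) Filter.atTop) ∧
    (∀ (Dn : ℕ → Ω → ℝ≥0 → ℝ≥0∞) (D : Ω → ℝ≥0 → ℝ≥0∞),
      (∀ n, IsDual S (Dn n)) → IsDual S D →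
      Filter.Tendsto (fun n => distE S h (Dn n) D) Filter.atTop (nhds 0) →
      ∀ C : Ω → ℝ≥0 → ℝ≥0∞, IsControl S C →
        pairing S C D ≤ Filter.liminf (fun n => pairing S C (Dn n)) Filter.atTop) :=
  statement14_general S h hcont hinj
end
end

section
/- A concave, upper-semicontinuous, real-valued function on a nonempty convex, convexly compact subset of a topological vector space attains its supremum on that set. -/
open Set Filter
open scoped Topology

/-- Convex compactness (Žitković) of a subset `K` of a topological vector space:
every family of convex subsets of `K` which are closed in `K` (in the subspace
topology) and have the finite intersection property has nonempty total
intersection. -/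
def ConvexlyCompactIn {E : Type*} [AddCommMonoid E] [Module ℝ E]
    [TopologicalSpace E] (K : Set E) : Prop :=
  ∀ {ι : Type*} (s : ι → Set E),
    (∀ i, s i ⊆ K) → (∀ i, Convex ℝ (s i)) →
    (∀ i, ∃ F : Set E, IsClosed F ∧ s i = K ∩ F) →
    (∀ J : Finset ι, (K ∩ ⋂ i ∈ J, s i).Nonempty) → (K ∩ ⋂ i, s i).Nonempty

/-! The superlevel sets `{x ∈ K | c ≤ f x}`, `c ∈ f '' K`, are convex (quasiconcavity), relatively
closed in `K` (upper semicontinuity) and nested, hence have the finite intersection property;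
by convex compactness they have a common point, which is a maximiser. -/

/-- `ConvexlyCompactIn K` quantifies over index types in one fixed universe; via `ULift` it applies
to families indexed by any `ι : Type`. -/
theorem ConvexlyCompactIn.nonempty_iInter {E : Type*} [AddCommMonoid E] [Module ℝ E]
    [TopologicalSpace E] {K : Set E} (hK : ConvexlyCompactIn K) {ι : Type} (s : ι → Set E)
    (hsub : ∀ i, s i ⊆ K) (hconv : ∀ i, Convex ℝ (s i))
    (hclosed : ∀ i, ∃ F : Set E, IsClosed F ∧ s i = K ∩ F)
    (hfip : ∀ J : Finset ι, (K ∩ ⋂ i ∈ J, s i).Nonempty) : (K ∩ ⋂ i, s i).Nonempty := by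
  obtain ⟨x, hxK, hx⟩ := hK (fun i : ULift ι => s i.down) (fun i => hsub i.down)
    (fun i => hconv i.down) (fun i => hclosed i.down) fun J => by
      obtain ⟨x, hxK, hx⟩ := hfip (J.map Equiv.ulift.toEmbedding)
      refine ⟨x, hxK, mem_iInter₂.2 fun i hi => ?_⟩
      exact mem_iInter₂.1 hx i.down (Finset.mem_map_of_mem _ hi)
  exact ⟨x, hxK, mem_iInter.2 fun i => mem_iInter.1 hx ⟨i⟩⟩

theorem nonempty_inter_biInter_superlevel_image {α β : Type*} [LinearOrder β] {K : Set α}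
    (hne : K.Nonempty) (f : α → β) (J : Finset (f '' K)) :
    (K ∩ ⋂ c ∈ J, K ∩ f ⁻¹' Ici (c : β)).Nonempty := by
  rcases J.eq_empty_or_nonempty with rfl | hJ
  · simpa using hne
  obtain ⟨⟨_, y, hyK, rfl⟩, -, hmax⟩ := J.exists_max_image (fun c => (c : β)) hJ
  exact ⟨y, hyK, mem_iInter₂.2 fun c hc => ⟨hyK, hmax c hc⟩⟩

theorem ConvexlyCompactIn.exists_isMaxOn {E : Type*} [AddCommMonoid E] [Module ℝ E]
    [TopologicalSpace E] {K : Set E} (hK : ConvexlyCompactIn K) (hne : K.Nonempty)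
    {f : E → ℝ} (hqc : QuasiconcaveOn ℝ K f) (husc : UpperSemicontinuousOn f K) :
    ∃ x ∈ K, IsMaxOn f K x := by
  obtain ⟨x, hxK, hx⟩ := hK.nonempty_iInter (fun c : f '' K => K ∩ f ⁻¹' Ici (c : ℝ))
    (fun _ => inter_subset_left) (fun c => hqc c)
    (fun c => upperSemicontinuousOn_iff_preimage_Ici.1 husc c)
    (nonempty_inter_biInter_superlevel_image hne f)
  exact ⟨x, hxK, fun y hy => (mem_iInter.1 hx ⟨f y, mem_image_of_mem f hy⟩).2⟩

theorem statement17_general {E : Type*}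
    [AddCommGroup E] [Module ℝ E] [TopologicalSpace E]
    (K : Set E) (hne : K.Nonempty)
    (hcc : ConvexlyCompactIn K)
    (f : E → ℝ) (hconc : ConcaveOn ℝ K f)
    (husc : UpperSemicontinuousOn f K) :
    ∃ x ∈ K, ∀ y ∈ K, f y ≤ f x :=
  hcc.exists_isMaxOn hne hconc.quasiconcaveOn husc

/-- a concave, upper-semicontinuous, real-valued function on a
nonempty convex, convexly compact subset of a topological vector space attains its
supremum on that set. -/
theorem statement17 {E : Type*}
    [AddCommGroup E] [Module ℝ E] [TopologicalSpace E]
    [IsTopologicalAddGroup E] [ContinuousSMul ℝ E]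
    (K : Set E) (hne : K.Nonempty) (hconv : Convex ℝ K)
    (hcc : ConvexlyCompactIn K)
    (f : E → ℝ) (hconc : ConcaveOn ℝ K f)
    (husc : UpperSemicontinuousOn f K) :
    ∃ x ∈ K, ∀ y ∈ K, f y ≤ f x :=
  statement17_general K hne hcc f hconc husc
end
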